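/- Let E and F be real inner product spaces, let W ⊆ E be a finite-dimensional subspace, let v ∈ E with ‖v‖ ≤ 1, let 0 ≤ ε ≤ 1/2, and let T : E → F be a linear map that is an ε-isometry on the subspace W + span{v}. Then | ‖P_{T(W)}(T v)‖ − ‖P_W(v)‖ | ≤ 9ε, where P_W and P_{T(W)} denote the orthogonal projections onto W and onto the image subspace T(W), respectively. -/

import Mathlib

/-!
Split `v = p + r` with `p = P_W v` and `r ⊥ W`, so that `P_{T(W)} (T v) = T p + P_{T(W)} (T r)`.
The first term has norm within `ε ‖p‖` of `‖p‖`. For the second, polarization shows that an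
`ε`-isometry almost preserves orthogonality, `⟪T r, T w⟫ ≤ 2ε ‖r‖ ‖w‖` for `w ∈ W`; writing
`P_{T(W)} (T r) = T w` gives `‖T w‖² = ⟪T r, T w⟫ ≤ 2ε ‖r‖ ‖T w‖ / (1 - ε)`, hence a norm `≤ 4ε`.
-/

open scoped RealInnerProductSpace

section

variable {E F : Type*} [NormedAddCommGroup E] [InnerProductSpace ℝ E]
  [NormedAddCommGroup F] [InnerProductSpace ℝ F]

def IsApproxIsometryOn (T : E →ₗ[ℝ] F) (S : Submodule ℝ E) (ε : ℝ) : Prop :=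
  ∀ w ∈ S, (1 - ε) * ‖w‖ ≤ ‖T w‖ ∧ ‖T w‖ ≤ (1 + ε) * ‖w‖

namespace IsApproxIsometryOn

variable {T : E →ₗ[ℝ] F} {S : Submodule ℝ E} {ε : ℝ}

theorem abs_norm_map_sub_norm_le (hT : IsApproxIsometryOn T S ε) {w : E} (hw : w ∈ S) :
    |‖T w‖ - ‖w‖| ≤ ε * ‖w‖ := by
  obtain ⟨hlower, hupper⟩ := hT w hw
  rw [abs_le]
  constructor <;> linarith

theorem inner_map_le (hT : IsApproxIsometryOn T S ε) (hε : ε ≤ 1) {x y : E}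
    (hx : x ∈ S) (hy : y ∈ S) :
    ⟪T x, T y⟫ ≤ (1 + ε ^ 2) * ⟪x, y⟫ + ε * (‖x‖ ^ 2 + ‖y‖ ^ 2) := by
  have hsum : ‖T (x + y)‖ ^ 2 ≤ ((1 + ε) * ‖x + y‖) ^ 2 :=
    pow_le_pow_left₀ (norm_nonneg _) (hT _ (S.add_mem hx hy)).2 2
  have hdiff : ((1 - ε) * ‖x - y‖) ^ 2 ≤ ‖T (x - y)‖ ^ 2 :=
    pow_le_pow_left₀ (mul_nonneg (by linarith) (norm_nonneg _)) (hT _ (S.sub_mem hx hy)).1 2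
  rw [map_add, mul_pow, norm_add_sq_real, norm_add_sq_real] at hsum
  rw [map_sub, mul_pow, norm_sub_sq_real, norm_sub_sq_real] at hdiff
  linear_combination (hsum + hdiff) / 4

theorem inner_map_le_of_inner_eq_zero (hT : IsApproxIsometryOn T S ε) (hε : ε ≤ 1) {x y : E}
    (hx : x ∈ S) (hy : y ∈ S) (hxy : ⟪x, y⟫ = 0) :
    ⟪T x, T y⟫ ≤ 2 * ε * (‖x‖ * ‖y‖) := by
  rcases (mul_nonneg (norm_nonneg x) (norm_nonneg y)).eq_or_lt with hzero | hpos
  · rcases mul_eq_zero.mp hzero.symm with hx0 | hy0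
    · simp [norm_eq_zero.mp hx0]
    · simp [norm_eq_zero.mp hy0]
  · -- rescale to `‖y‖ • x` and `‖x‖ • y`, which have equal norms
    have h := hT.inner_map_le hε (S.smul_mem ‖y‖ hx) (S.smul_mem ‖x‖ hy)
    simp only [map_smul, real_inner_smul_left, real_inner_smul_right, norm_smul, norm_norm,
      hxy] at h
    refine le_of_mul_le_mul_left ?_ hpos
    linear_combination h

theorem norm_starProjection_map_le {W : Submodule ℝ E} [(W.map T).HasOrthogonalProjection]
    (hT : IsApproxIsometryOn T S ε) (hε0 : 0 ≤ ε) (hε1 : ε ≤ 1) (hWS : W ≤ S)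
    {r : E} (hrS : r ∈ S) (hrW : r ∈ Wᗮ) :
    (1 - ε) * ‖(W.map T).starProjection (T r)‖ ≤ 2 * ε * ‖r‖ := by
  set z := (W.map T).starProjection (T r)
  obtain ⟨w, hwW, hwz⟩ := (W.map T).starProjection_apply_mem (T r)
  have hz_sq : ‖z‖ * ‖z‖ = ⟪T r, T w⟫ := by
    rw [← real_inner_self_eq_norm_mul_norm, Submodule.inner_starProjection_left_eq_right,
      Submodule.starProjection_eq_self_iff.mpr (Submodule.starProjection_apply_mem _ _), hwz]
  have hinner := hT.inner_map_le_of_inner_eq_zero hε1 hrS (hWS hwW)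
    (Submodule.inner_left_of_mem_orthogonal hwW hrW)
  have hw_le : (1 - ε) * ‖w‖ ≤ ‖z‖ := by simpa only [hwz] using (hT w (hWS hwW)).1
  rcases (norm_nonneg z).eq_or_lt with hz0 | hzpos
  · rw [← hz0, mul_zero]
    positivity
  · refine le_of_mul_le_mul_left ?_ hzpos
    calc ‖z‖ * ((1 - ε) * ‖z‖) = (1 - ε) * ⟪T r, T w⟫ := by rw [← hz_sq]; ring
      _ ≤ (1 - ε) * (2 * ε * (‖r‖ * ‖w‖)) := mul_le_mul_of_nonneg_left hinner (by linarith)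
      _ = 2 * ε * ‖r‖ * ((1 - ε) * ‖w‖) := by ring
      _ ≤ 2 * ε * ‖r‖ * ‖z‖ := mul_le_mul_of_nonneg_left hw_le (by positivity)
      _ = ‖z‖ * (2 * ε * ‖r‖) := by ring

end IsApproxIsometryOn

theorem Submodule.starProjection_map_apply_eq_add (T : E →ₗ[ℝ] F) (W : Submodule ℝ E)
    [W.HasOrthogonalProjection] [(W.map T).HasOrthogonalProjection] (v : E) :
    (W.map T).starProjection (T v) =
      T (W.starProjection v) + (W.map T).starProjection (T (Wᗮ.starProjection v)) := by
  conv_lhs => rw [← W.starProjection_add_starProjection_orthogonal v]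
  rw [map_add, map_add,
    starProjection_eq_self_iff.mpr (mem_map_of_mem (starProjection_apply_mem _ _))]

end

/-- **Lemma 2 (Orthogonalizing the sketch), coordinate-free form.**
Let `W` be a finite-dimensional subspace of a real inner product space `E`, let
`‖v‖ ≤ 1`, let `0 ≤ ε ≤ 1/2`, and let `T` be a linear map that is an `ε`-isometry
on `W + span{v}`. Then the norms of the orthogonal projections of `T v` onto `T(W)`
and of `v` onto `W` differ by at most `9ε`. -/
theorem sketched_projection_norm_close
    {E F : Type*} [NormedAddCommGroup E] [InnerProductSpace ℝ E]
    [NormedAddCommGroup F] [InnerProductSpace ℝ F]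
    (W : Submodule ℝ E) [FiniteDimensional ℝ W]
    (v : E) (hv : ‖v‖ ≤ 1)
    (ε : ℝ) (hε0 : 0 ≤ ε) (hε1 : ε ≤ 1 / 2)
    (T : E →ₗ[ℝ] F)
    (hT : ∀ w ∈ W ⊔ Submodule.span ℝ {v},
      (1 - ε) * ‖w‖ ≤ ‖T w‖ ∧ ‖T w‖ ≤ (1 + ε) * ‖w‖) :
    abs (‖(Submodule.orthogonalProjectionOnto (W.map T) (T v) : F)‖
      - ‖(Submodule.orthogonalProjectionOnto W v : E)‖) ≤ 9 * ε := by
  have hTS : IsApproxIsometryOn T (W ⊔ Submodule.span ℝ {v}) ε := hT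
  have hWS : W ≤ W ⊔ Submodule.span ℝ {v} := le_sup_left
  have hvS : v ∈ W ⊔ Submodule.span ℝ {v} :=
    Submodule.mem_sup_right (Submodule.mem_span_singleton_self v)
  rw [Submodule.coe_orthogonalProjectionOnto_apply, Submodule.coe_orthogonalProjectionOnto_apply,
    Submodule.starProjection_map_apply_eq_add]
  set p := W.starProjection v
  set r := Wᗮ.starProjection v
  set z := (W.map T).starProjection (T r)
  have hpW : p ∈ W := W.starProjection_apply_mem v
  have hrS : r ∈ W ⊔ Submodule.span ℝ {v} := by
    rw [show r = v - p from Submodule.starProjection_orthogonal_val v]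
    exact Submodule.sub_mem _ hvS (hWS hpW)
  have hz : (1 - ε) * ‖z‖ ≤ 2 * ε * ‖r‖ :=
    hTS.norm_starProjection_map_le hε0 (by linarith) hWS hrS (Wᗮ.starProjection_apply_mem v)
  have hp : |‖T p‖ - ‖p‖| ≤ ε * ‖p‖ := hTS.abs_norm_map_sub_norm_le (hWS hpW)
  have hp1 : ‖p‖ ≤ 1 := (W.norm_starProjection_apply_le v).trans hv
  have hr1 : ‖r‖ ≤ 1 := (Wᗮ.norm_starProjection_apply_le v).trans hv
  calc |‖T p + z‖ - ‖p‖| ≤ |‖T p + z‖ - ‖T p‖| + |‖T p‖ - ‖p‖| := abs_sub_le _ _ _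
    _ ≤ ‖z‖ + ε * ‖p‖ := add_le_add (by simpa using abs_norm_sub_norm_le (T p + z) (T p)) hp
    _ ≤ 9 * ε := by
      linarith [mul_le_mul_of_nonneg_left hr1 hε0, mul_le_mul_of_nonneg_left hp1 hε0,
        mul_nonneg (by linarith : 0 ≤ 1 / 2 - ε) (norm_nonneg z)]
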